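/- Let a(s) be a monic real polynomial of degree n that is Hurwitz stable, let c(s) = s^{n-1} + x₁ s^{n-2} + ⋯ + x_{n-1} be a monic real polynomial of degree n-1 with Re[c(jω)/a(jω)] > 0 for all real ω, and let h(s) be any monic real polynomial of degree n. Then there exists δ₀ > 0 such that for all 0 < δ < δ₀, the rational function (c(s) + δ·h(s))/a(s) is strictly positive real. -/

import Mathlib

/-!
On the imaginary axis `Re[(c + δh)/a] = Re[c/a] + δ·Re[h/a]`. The first term is continuous and
positive, and since `h` and `a` are monic of the same degree, `h/a → 1` as `|ω| → ∞`, so the second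
term is nonnegative off a compact set. On that compact set `Re[h/a] / Re[c/a]` is bounded, which
leaves room for a small `δ`.
-/

open Polynomial Complex

noncomputable def evalI (p : Polynomial ℝ) (ω : ℝ) : ℂ :=
  Polynomial.aeval ((ω : ℂ) * Complex.I) p

def HurwitzStable (p : Polynomial ℝ) : Prop :=
  ∀ z : ℂ, Polynomial.aeval z p = 0 → z.re < 0

def SPR (p q : Polynomial ℝ) : Prop :=
  p.degree = q.degree ∧ HurwitzStable q ∧
    ∀ ω : ℝ, 0 < (evalI p ω / evalI q ω).re

open Filter Topology Asymptotics Bornology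

lemma exists_pos_forall_add_mul_pos {X : Type*} [TopologicalSpace X] {f g : X → ℝ}
    (hf : Continuous f) (hg : Continuous g) (hf_pos : ∀ x, 0 < f x)
    (hg_nonneg : ∀ᶠ x in cocompact X, 0 ≤ g x) :
    ∃ δ₀ > 0, ∀ δ, 0 ≤ δ → δ < δ₀ → ∀ x, 0 < f x + δ * g x := by
  obtain ⟨K, hK, hKg⟩ := mem_cocompact.mp hg_nonneg
  have hquot : ContinuousOn (fun x => g x / f x) K :=
    (hg.div hf fun x => (hf_pos x).ne').continuousOn
  obtain ⟨C, hC⟩ := hK.exists_bound_of_continuousOn hquot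
  refine ⟨1 / (|C| + 1), by positivity, fun δ hδ hδ₀ x => ?_⟩
  by_cases hx : x ∈ K
  · have hfx := hf_pos x
    have hδC : δ * |C| < 1 := by
      rw [lt_div_iff₀ (by positivity)] at hδ₀
      nlinarith [abs_nonneg C]
    have hgx : -|C| * f x ≤ g x := by
      have hbound : |g x / f x| ≤ |C| := (hC x hx).trans (le_abs_self C)
      rw [← le_div_iff₀ hfx]
      exact (neg_le_neg hbound).trans (neg_abs_le _)
    nlinarith
  · have hgx : 0 ≤ g x := hKg hx
    nlinarith [hf_pos x]

lemma Polynomial.isEquivalent_cobounded_of_leadingCoeff_eq {R : Type*} [NormedRing R]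
    [NormMulClass R] {P Q : R[X]} (hlc : P.leadingCoeff = Q.leadingCoeff)
    (hdeg : P.natDegree = Q.natDegree) : P.eval ~[cobounded R] Q.eval := by
  have hQ := isEquivalent_cobounded_leading_monomial (P := Q)
  rw [← hlc, ← hdeg] at hQ
  exact isEquivalent_cobounded_leading_monomial.trans hQ.symm

lemma Polynomial.degree_add_C_mul_of_degree_lt {R : Type*} [Semiring R] [NoZeroDivisors R]
    {p q : R[X]} {δ : R} (hpq : p.degree < q.degree) (hδ : δ ≠ 0) : (p + C δ * q).degree = q.degree := by
  rw [degree_add_eq_right_of_degree_lt (by rwa [degree_C_mul hδ]), degree_C_mul hδ]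

lemma tendsto_ofReal_mul_I_cocompact :
    Tendsto (fun ω : ℝ => (ω : ℂ) * I) (cocompact ℝ) (cobounded ℂ) := by
  rw [← tendsto_norm_atTop_iff_cobounded]
  simpa only [norm_mul, norm_I, mul_one, norm_real] using tendsto_norm_cocompact_atTop (E := ℝ)

lemma evalI_eq_eval_map (p : ℝ[X]) (ω : ℝ) :
    evalI p ω = (p.map (algebraMap ℝ ℂ)).eval ((ω : ℂ) * I) := by
  rw [evalI, aeval_def, eval_map]

lemma continuous_evalI (p : ℝ[X]) : Continuous (evalI p) :=
  (p.continuous_aeval (A := ℂ)).comp (continuous_ofReal.mul continuous_const)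

lemma evalI_add_C_mul (p q : ℝ[X]) (δ ω : ℝ) :
    evalI (p + C δ * q) ω = evalI p ω + δ * evalI q ω := by
  simp [evalI]

lemma HurwitzStable.evalI_ne_zero {a : ℝ[X]} (ha : HurwitzStable a) (ω : ℝ) : evalI a ω ≠ 0 :=
  fun h0 => by simpa using ha _ h0

lemma tendsto_evalI_div_evalI {p a : ℝ[X]} (hlc : p.leadingCoeff = a.leadingCoeff)
    (hdeg : p.natDegree = a.natDegree) (ha : ∀ ω, evalI a ω ≠ 0) :
    Tendsto (fun ω => evalI p ω / evalI a ω) (cocompact ℝ) (𝓝 1) := by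
  have hequiv : (fun ω => evalI p ω) ~[cocompact ℝ] fun ω => evalI a ω := by
    simp only [evalI_eq_eval_map]
    refine (isEquivalent_cobounded_of_leadingCoeff_eq ?_ ?_).comp_tendsto
      tendsto_ofReal_mul_I_cocompact
    · simp [hlc]
    · simp [hdeg]
  exact (isEquivalent_iff_tendsto_one (.of_forall ha)).mp hequiv

theorem spr_perturbation_general (n : ℕ) (hn : 1 ≤ n) (a c h : Polynomial ℝ)
    (hamon : a.Monic) (hadeg : a.natDegree = n) (haH : HurwitzStable a)
    (hcdeg : c.natDegree = n - 1)
    (hpos : ∀ ω : ℝ, 0 < (evalI c ω / evalI a ω).re)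
    (hhmon : h.Monic) (hhdeg : h.natDegree = n) :
    ∃ δ₀ > (0 : ℝ), ∀ δ : ℝ, 0 < δ → δ < δ₀ →
      SPR (c + Polynomial.C δ * h) a := by
  have ha0 := haH.evalI_ne_zero
  have hcont (p : ℝ[X]) : Continuous fun ω => (evalI p ω / evalI a ω).re :=
    continuous_re.comp ((continuous_evalI p).div (continuous_evalI a) ha0)
  have hh_nonneg : ∀ᶠ ω in cocompact ℝ, 0 ≤ (evalI h ω / evalI a ω).re := by
    have hlim := (continuous_re.tendsto 1).comp
      (tendsto_evalI_div_evalI (by rw [hhmon, hamon]) (hhdeg.trans hadeg.symm) ha0)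
    exact (hlim.eventually (eventually_gt_nhds (by simp))).mono fun _ => le_of_lt
  obtain ⟨δ₀, hδ₀, hδ⟩ := exists_pos_forall_add_mul_pos (hcont c) (hcont h) hpos hh_nonneg
  refine ⟨δ₀, hδ₀, fun δ hδ_pos hδ_lt => ⟨?_, haH, fun ω => ?_⟩⟩
  · have hch : c.degree < h.degree := degree_lt_degree (by omega)
    rw [degree_add_C_mul_of_degree_lt hch hδ_pos.ne', degree_eq_natDegree hhmon.ne_zero,
      degree_eq_natDegree hamon.ne_zero, hhdeg, hadeg]
  · rw [evalI_add_C_mul, add_div, mul_div_assoc, add_re, re_ofReal_mul]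
    exact hδ δ hδ_pos.le hδ_lt ω

theorem spr_perturbation (n : ℕ) (hn : 1 ≤ n) (a c h : Polynomial ℝ)
    (hamon : a.Monic) (hadeg : a.natDegree = n) (haH : HurwitzStable a)
    (hcmon : c.Monic) (hcdeg : c.natDegree = n - 1)
    (hpos : ∀ ω : ℝ, 0 < (evalI c ω / evalI a ω).re)
    (hhmon : h.Monic) (hhdeg : h.natDegree = n) :
    ∃ δ₀ > (0 : ℝ), ∀ δ : ℝ, 0 < δ → δ < δ₀ →
      SPR (c + Polynomial.C δ * h) a :=
  spr_perturbation_general n hn a c h hamon hadeg haH hcdeg hpos hhmon hhdeg
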